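/- arXiv:0803.3868 — 6 statements merged into one kernel-verified Lean document; each statement's English description precedes it below -/
import Mathlib

section
/- If a finite group G has a subnormal series in which every factor is either a π-group or a π'-group, then G contains a π-Hall subgroup. -/
/-!
Induction on `|G|`. Walking up the series, the `π`-core or the `π'`-core of the terms eventually
becomes nontrivial and stays so: a core `O_ρ(K)` is characteristic in `K`, hence normal in every
subgroup normalizing `K`. This yields a nontrivial normal subgroup `M` of `G` which is a `π`-group
or a `π'`-group. The series passes to `G ⧸ M`, which by induction has a `π`-Hall subgroup `Q`.
If `M` is a `π`-group, the preimage of `Q` is `π`-Hall in `G`; otherwise `M` has `π`-index in that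
preimage, and a Schur–Zassenhaus complement of `M` there is `π`-Hall in `G`.
-/

/-- `n` is a `π`-number: every prime divisor of `n` lies in `π`. -/
def IsPiNumber (π : Set ℕ) (n : ℕ) : Prop := ∀ p : ℕ, p.Prime → p ∣ n → p ∈ π

/-- `H` is a `π`-Hall subgroup of `G`: `|H|` is a `π`-number and `|G : H|` is a `π'`-number. -/
def IsPiHall (π : Set ℕ) {G : Type*} [Group G] (H : Subgroup G) : Prop :=
  IsPiNumber π (Nat.card H) ∧ ∀ p : ℕ, p.Prime → p ∣ H.index → p ∉ π

open Subgroup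

section PiNumber

variable {π : Set ℕ} {m n : ℕ}

theorem isPiNumber_one : IsPiNumber π 1 := fun _ hp hd => absurd (Nat.dvd_one.mp hd) hp.ne_one

theorem IsPiNumber.of_dvd (hn : IsPiNumber π n) (h : m ∣ n) : IsPiNumber π m :=
  fun p hp hd => hn p hp (hd.trans h)

theorem IsPiNumber.mul (hm : IsPiNumber π m) (hn : IsPiNumber π n) : IsPiNumber π (m * n) :=
  fun p hp hd => (hp.dvd_mul.mp hd).elim (hm p hp) (hn p hp)

theorem IsPiNumber.coprime (hm : IsPiNumber π m) (hn : IsPiNumber πᶜ n) : m.Coprime n :=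
  Nat.coprime_of_dvd fun p hp hpm hpn => hn p hp hpn (hm p hp hpm)

end PiNumber

section Hall

variable {G : Type*} [Group G] {π : Set ℕ}

theorem isPiHall_iff {H : Subgroup G} :
    IsPiHall π H ↔ IsPiNumber π (Nat.card H) ∧ IsPiNumber πᶜ H.index :=
  Iff.rfl

theorem isPiHall_top (h : IsPiNumber π (Nat.card G)) : IsPiHall π (⊤ : Subgroup G) := by
  rw [isPiHall_iff, card_top, index_top]
  exact ⟨h, isPiNumber_one⟩

theorem IsPiHall.map_subtype {K : Subgroup G} {H : Subgroup K} (hH : IsPiHall π H)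
    (hK : IsPiNumber πᶜ K.index) : IsPiHall π (H.map K.subtype) := by
  rw [isPiHall_iff, card_map_of_injective K.subtype_injective, index_map_subtype]
  exact ⟨hH.1, (isPiHall_iff.mp hH).2.mul hK⟩

theorem exists_isPiHall_of_normal [Finite G] (N : Subgroup G) [N.Normal]
    (hN : IsPiNumber π (Nat.card N) ∨ IsPiNumber πᶜ (Nat.card N)) (hidx : IsPiNumber π N.index) :
    ∃ H : Subgroup G, IsPiHall π H := by
  rcases hN with hN | hN
  · exact ⟨⊤, isPiHall_top (N.card_mul_index ▸ hN.mul hidx)⟩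
  · obtain ⟨C, hC⟩ := exists_right_complement'_of_coprime (hidx.coprime hN).symm
    refine ⟨C, isPiHall_iff.mpr ⟨?_, hC.index_eq_card ▸ hN⟩⟩
    rw [show Nat.card C = N.index from hC.card_right]
    exact hidx

theorem exists_isPiHall_of_quotient [Finite G] (M : Subgroup G) [M.Normal]
    (hM : IsPiNumber π (Nat.card M) ∨ IsPiNumber πᶜ (Nat.card M))
    {Q : Subgroup (G ⧸ M)} (hQ : IsPiHall π Q) : ∃ H : Subgroup G, IsPiHall π H := by
  set K := Q.comap (QuotientGroup.mk' M)
  have hMK : M ≤ K := QuotientGroup.le_comap_mk' M Q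
  have hKidx : K.index = Q.index := index_comap_of_surjective _ (QuotientGroup.mk'_surjective M)
  have hcard : Nat.card (M.subgroupOf K) = Nat.card M :=
    Nat.card_congr (subgroupOfEquivOfLe hMK).toEquiv
  have hidx : (M.subgroupOf K).index = Nat.card Q := by
    have h := relIndex_mul_index hMK
    rw [hKidx, M.index_eq_card, ← Q.card_mul_index] at h
    exact Nat.eq_of_mul_eq_mul_right (Nat.pos_of_ne_zero Q.index_ne_zero_of_finite) h
  obtain ⟨H, hH⟩ := exists_isPiHall_of_normal (M.subgroupOf K) (hcard ▸ hM) (hidx ▸ hQ.1)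
  exact ⟨_, hH.map_subtype (hKidx ▸ (isPiHall_iff.mp hQ).2)⟩

end Hall

section PiCore

variable {G : Type*} [Group G] {π : Set ℕ}

theorem relIndex_sup_of_le_normalizer {P Q : Subgroup G} (h : P ≤ normalizer Q) :
    Q.relIndex (P ⊔ Q) = Q.relIndex P := by
  have := normal_subgroupOf_of_le_normalizer h
  have := normal_subgroupOf_sup_of_le_normalizer h
  exact (Nat.card_congr (QuotientGroup.quotientInfEquivProdNormalizerQuotient P Q h).toEquiv).symm

theorem card_sup_dvd_of_le_normalizer {P Q : Subgroup G} (h : P ≤ normalizer Q) :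
    Nat.card ↥(P ⊔ Q) ∣ Nat.card P * Nat.card Q := by
  rw [← relIndex_bot_left, ← relIndex_mul_relIndex ⊥ Q (P ⊔ Q) bot_le le_sup_right,
    relIndex_sup_of_le_normalizer h, relIndex_bot_left, mul_comm]
  exact Nat.mul_dvd_mul_right (relIndex_dvd_card Q P) _

def normalPiSubgroups (π : Set ℕ) (K : Subgroup G) : Set (Subgroup G) :=
  {P | P ≤ K ∧ K ≤ normalizer P ∧ IsPiNumber π (Nat.card P)}

theorem supClosed_normalPiSubgroups (π : Set ℕ) (K : Subgroup G) :
    SupClosed (normalPiSubgroups π K) := by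
  rintro P ⟨hPK, hKP, hP⟩ Q ⟨hQK, hKQ, hQ⟩
  exact ⟨sup_le hPK hQK, (le_inf hKP hKQ).trans (normalizer_inf_normalizer_le_normalizer_sup P Q),
    (hP.mul hQ).of_dvd (card_sup_dvd_of_le_normalizer (hPK.trans hKQ))⟩

theorem bot_mem_normalPiSubgroups (π : Set ℕ) (K : Subgroup G) :
    ⊥ ∈ normalPiSubgroups π K :=
  ⟨bot_le, le_normalizer_of_normal, by rw [card_bot]; exact isPiNumber_one⟩

-- `O_π(K)`
def piCore (π : Set ℕ) (K : Subgroup G) : Subgroup G :=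
  sSup (normalPiSubgroups π K)

theorem le_piCore {K P : Subgroup G} (hP : P ∈ normalPiSubgroups π K) : P ≤ piCore π K :=
  le_sSup hP

variable [Finite G]

theorem piCore_mem (π : Set ℕ) (K : Subgroup G) : piCore π K ∈ normalPiSubgroups π K :=
  (supClosed_normalPiSubgroups π K).sSup_mem (Set.toFinite _) (bot_mem_normalPiSubgroups π K)
    subset_rfl

theorem le_normalizer_piCore {K K' : Subgroup G} (h : K' ≤ normalizer K) :
    K' ≤ normalizer (piCore π K) := by
  intro g hg
  obtain ⟨hcK, hKc, hc⟩ := piCore_mem π K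
  have hK : K.map (MulAut.conj g) = K := mem_normalizer_iff_map_conj_eq.mp (h hg)
  have hcard := card_map_of_injective (K := piCore π K) (f := (MulAut.conj g : G →* G))
    (MulAut.conj g).injective
  have hmem : (piCore π K).map (MulAut.conj g) ∈ normalPiSubgroups π K :=
    ⟨(map_mono hcK).trans hK.le, hK.ge.trans ((map_mono hKc).trans (le_normalizer_map _)),
      hcard ▸ hc⟩
  exact mem_normalizer_iff_map_conj_eq.mpr (eq_of_le_of_card_ge (le_piCore hmem) hcard.ge)

theorem piCore_mono {K K' : Subgroup G} (hle : K ≤ K') (h : K' ≤ normalizer K) :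
    piCore π K ≤ piCore π K' :=
  le_piCore ⟨(piCore_mem π K).1.trans hle, le_normalizer_piCore h, (piCore_mem π K).2.2⟩

theorem piCore_eq_self {K : Subgroup G} (h : IsPiNumber π (Nat.card K)) : piCore π K = K :=
  le_antisymm (piCore_mem π K).1 (le_piCore ⟨le_rfl, le_normalizer, h⟩)

instance normal_piCore_top : (piCore π (⊤ : Subgroup G)).Normal :=
  normalizer_eq_top_iff.mp (top_le_iff.mp (le_normalizer_piCore le_normalizer_of_normal))

end PiCore

section Series

variable {G : Type*} [Group G] {π : Set ℕ} {n : ℕ}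

theorem relIndex_map_dvd {G' : Type*} [Group G'] (f : G →* G') (H K : Subgroup G) :
    (H.map f).relIndex (K.map f) ∣ H.relIndex K := by
  refine (index_dvd_of_le ?_).trans ((H.subgroupOf K).index_map_dvd (f.subgroupMap_surjective K))
  rintro _ ⟨x, hx, rfl⟩
  exact ⟨x, hx, rfl⟩

structure IsPiSeparableSeries (π : Set ℕ) (s : Fin (n + 1) → Subgroup G) : Prop where
  zero : s 0 = ⊥
  last : s (Fin.last n) = ⊤
  le_succ : ∀ i : Fin n, s i.castSucc ≤ s i.succ
  succ_le_normalizer : ∀ i : Fin n, s i.succ ≤ normalizer (s i.castSucc)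
  factor : ∀ i : Fin n, IsPiNumber π ((s i.castSucc).relIndex (s i.succ)) ∨
    IsPiNumber πᶜ ((s i.castSucc).relIndex (s i.succ))

namespace IsPiSeparableSeries

variable {s : Fin (n + 1) → Subgroup G}

theorem map (hs : IsPiSeparableSeries π s) {G' : Type*} [Group G'] {f : G →* G'}
    (hf : Function.Surjective f) : IsPiSeparableSeries π fun i => (s i).map f where
  zero := by rw [hs.zero, Subgroup.map_bot]
  last := by rw [hs.last, map_top_of_surjective f hf]
  le_succ i := map_mono (hs.le_succ i)
  succ_le_normalizer i := (map_mono (hs.succ_le_normalizer i)).trans (le_normalizer_map f)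
  factor i :=
    (hs.factor i).imp (·.of_dvd (relIndex_map_dvd f _ _)) (·.of_dvd (relIndex_map_dvd f _ _))

variable [Finite G]

theorem piCore_ne_bot (hs : IsPiSeparableSeries π s) (i : Fin (n + 1)) (hi : s i ≠ ⊥) :
    piCore π (s i) ≠ ⊥ ∨ piCore πᶜ (s i) ≠ ⊥ := by
  induction i using Fin.induction with
  | zero => exact absurd hs.zero hi
  | succ i ih =>
    have hmono (ρ : Set ℕ) : piCore ρ (s i.castSucc) ≤ piCore ρ (s i.succ) :=
      piCore_mono (hs.le_succ i) (hs.succ_le_normalizer i)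
    by_cases hbot : s i.castSucc = ⊥
    · have hfac := hs.factor i
      rw [hbot, relIndex_bot_left] at hfac
      rcases hfac with hfac | hfac
      · exact Or.inl (by rwa [piCore_eq_self hfac])
      · exact Or.inr (by rwa [piCore_eq_self hfac])
    · exact (ih hbot).imp (fun h => ne_bot_of_le_ne_bot h (hmono π))
        (fun h => ne_bot_of_le_ne_bot h (hmono πᶜ))

theorem exists_normal_ne_bot [Nontrivial G] (hs : IsPiSeparableSeries π s) :
    ∃ M : Subgroup G, M.Normal ∧ M ≠ ⊥ ∧
      (IsPiNumber π (Nat.card M) ∨ IsPiNumber πᶜ (Nat.card M)) := by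
  rcases hs.piCore_ne_bot (Fin.last n) (hs.last ▸ top_ne_bot) with h | h <;> rw [hs.last] at h
  · exact ⟨_, normal_piCore_top, h, Or.inl (piCore_mem π ⊤).2.2⟩
  · exact ⟨_, normal_piCore_top, h, Or.inr (piCore_mem πᶜ ⊤).2.2⟩

theorem exists_isPiHall (hs : IsPiSeparableSeries π s) : ∃ H : Subgroup G, IsPiHall π H := by
  induction hG : Nat.card G using Nat.strong_induction_on generalizing G with
  | _ m ih =>
  rcases subsingleton_or_nontrivial G with _ | _
  · exact ⟨⊤, isPiHall_top (by rw [Nat.card_unique]; exact isPiNumber_one)⟩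
  obtain ⟨M, _, hM, hMπ⟩ := hs.exists_normal_ne_bot
  have hlt : Nat.card (G ⧸ M) < m := by
    rw [← index_eq_card, ← hG, ← M.card_mul_index]
    exact lt_mul_of_one_lt_left (Nat.pos_of_ne_zero M.index_ne_zero_of_finite)
      ((one_lt_card_iff_ne_bot M).mpr hM)
  obtain ⟨Q, hQ⟩ := ih _ hlt (hs.map (QuotientGroup.mk'_surjective M)) rfl
  exact exists_isPiHall_of_quotient M hMπ hQ

end IsPiSeparableSeries

end Series

/-- If a finite group `G` has a subnormal series in which every factor is either a
`π`-group or a `π'`-group, then `G` has a `π`-Hall subgroup. -/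
theorem epi_of_subnormal_series {G : Type*} [Group G] [Finite G] (π : Set ℕ) (n : ℕ)
    (s : Fin (n + 1) → Subgroup G)
    (h0 : s 0 = ⊥) (hn : s (Fin.last n) = ⊤)
    (hle : ∀ i : Fin n, s i.castSucc ≤ s i.succ)
    (hnorm : ∀ i : Fin n, ((s i.castSucc).subgroupOf (s i.succ)).Normal)
    (hfac : ∀ i : Fin n,
      IsPiNumber π (Nat.card ((s i.succ) ⧸ (s i.castSucc).subgroupOf (s i.succ))) ∨
      IsPiNumber πᶜ (Nat.card ((s i.succ) ⧸ (s i.castSucc).subgroupOf (s i.succ)))) :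
    ∃ H : Subgroup G, IsPiHall π H :=
  -- `Nat.card (B ⧸ A.subgroupOf B)` is `A.relIndex B` by definition
  IsPiSeparableSeries.exists_isPiHall
    { zero := h0
      last := hn
      le_succ := hle
      succ_le_normalizer := fun i => (normal_subgroupOf_iff_le_normalizer (hle i)).mp (hnorm i)
      factor := hfac }
end

section
/- Let M and N be normal subgroups of a finite group G with M ∩ N = 1, let A, B be subgroups of M with B normal in A, and let the bar denote the natural homomorphism G → G/N. If x ∈ G and the image of x normalizes both A̅ and B̅ in G/N, then x normalizes A and B. Consequently the image of N_G(A/B) in G/N equals N_{G/N}(A̅/B̅). -/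
/-! If `f` is injective on a normal subgroup `M ⊇ C`, the preimage `C ⊔ ker f` of `f(C)` meets
`M` exactly in `C` (Dedekind's law), so anything whose image normalizes `f(C)` normalizes both
`C ⊔ ker f` and `M`, hence `C`. Taking `f = G → G/N` gives the theorem, the inclusion of the
image of `N_G(A) ∩ N_G(B)` in `N(A̅) ∩ N(B̅)` being automatic. -/

namespace Subgroup

variable {G H : Type*} [Group G] [Group H]

theorem sup_inf_assoc_of_le_of_normal {C K M : Subgroup G} [K.Normal] (hCM : C ≤ M) :
    (C ⊔ K) ⊓ M = C ⊔ (K ⊓ M) := by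
  refine le_antisymm ?_ (le_inf (sup_le_sup_left inf_le_left C) (sup_le hCM inf_le_right))
  rintro x ⟨hxCK, hxM⟩
  obtain ⟨c, hc, k, hk, rfl⟩ := mem_sup_of_normal_right.mp hxCK
  have hkM : k ∈ M := by simpa using M.mul_mem (M.inv_mem (hCM hc)) hxM
  exact mul_mem_sup hc ⟨hk, hkM⟩

theorem comap_normalizer_map_eq_of_inf_ker_eq_bot {f : G →* H} {M C : Subgroup G} [M.Normal]
    (hM : M ⊓ f.ker = ⊥) (hCM : C ≤ M) :
    (normalizer (C.map f : Set H)).comap f = normalizer (C : Set G) := by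
  refine le_antisymm (fun x hx ↦ ?_) (map_le_iff_le_comap.mp (le_normalizer_map f))
  have hx_preimage : x ∈ normalizer ((C ⊔ f.ker : Subgroup G) : Set G) :=
    comap_map_eq f C ▸ le_normalizer_comap f hx
  have hx_M : x ∈ normalizer (M : Set G) := le_normalizer_of_normal (mem_top x)
  simpa [sup_inf_assoc_of_le_of_normal hCM, inf_comm, hM] using
    inf_normalizer_le_normalizer_inf ⟨hx_preimage, hx_M⟩

end Subgroup

theorem normalizer_section_quotient_general {G : Type*} [Group G]
    (M N : Subgroup G) [M.Normal] [N.Normal] (hMN : M ⊓ N = ⊥)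
    (A B : Subgroup G) (hAM : A ≤ M) (hBA : B ≤ A) :
    (∀ x : G,
        QuotientGroup.mk' N x ∈ Subgroup.normalizer ((A.map (QuotientGroup.mk' N) : Subgroup (G ⧸ N)) : Set (G ⧸ N)) →
        QuotientGroup.mk' N x ∈ Subgroup.normalizer ((B.map (QuotientGroup.mk' N) : Subgroup (G ⧸ N)) : Set (G ⧸ N)) →
        x ∈ Subgroup.normalizer (A : Set G) ∧ x ∈ Subgroup.normalizer (B : Set G)) ∧
      (Subgroup.normalizer (A : Set G) ⊓ Subgroup.normalizer (B : Set G)).map (QuotientGroup.mk' N) =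
        Subgroup.normalizer ((A.map (QuotientGroup.mk' N) : Subgroup (G ⧸ N)) : Set (G ⧸ N)) ⊓
          Subgroup.normalizer ((B.map (QuotientGroup.mk' N) : Subgroup (G ⧸ N)) : Set (G ⧸ N)) := by
  have hker : M ⊓ (QuotientGroup.mk' N).ker = ⊥ := by rwa [QuotientGroup.ker_mk']
  have hA := Subgroup.comap_normalizer_map_eq_of_inf_ker_eq_bot hker hAM
  have hB := Subgroup.comap_normalizer_map_eq_of_inf_ker_eq_bot hker (hBA.trans hAM)
  refine ⟨fun x hxA hxB ↦ ⟨hA ▸ Subgroup.mem_comap.mpr hxA, hB ▸ Subgroup.mem_comap.mpr hxB⟩, ?_⟩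
  rw [← hA, ← hB, ← Subgroup.comap_inf,
    Subgroup.map_comap_eq_self_of_surjective (QuotientGroup.mk'_surjective N)]

/-- Let `M, N ⊴ G` with `M ∩ N = 1` and `B ⊴ A ≤ M`. If the image of `x` in `G/N`
normalizes the images of `A` and `B`, then `x` normalizes `A` and `B`; consequently
the image of `N_G(A/B) = N_G(A) ∩ N_G(B)` in `G/N` equals `N_{G/N}(A̅/B̅)`. -/
theorem normalizer_section_quotient {G : Type*} [Group G] [Finite G]
    (M N : Subgroup G) [M.Normal] [N.Normal] (hMN : M ⊓ N = ⊥)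
    (A B : Subgroup G) (hAM : A ≤ M) (hBA : B ≤ A)
    (hBnormA : ∀ a ∈ A, ∀ b ∈ B, a * b * a⁻¹ ∈ B) :
    (∀ x : G,
        QuotientGroup.mk' N x ∈ Subgroup.normalizer ((A.map (QuotientGroup.mk' N) : Subgroup (G ⧸ N)) : Set (G ⧸ N)) →
        QuotientGroup.mk' N x ∈ Subgroup.normalizer ((B.map (QuotientGroup.mk' N) : Subgroup (G ⧸ N)) : Set (G ⧸ N)) →
        x ∈ Subgroup.normalizer (A : Set G) ∧ x ∈ Subgroup.normalizer (B : Set G)) ∧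
      (Subgroup.normalizer (A : Set G) ⊓ Subgroup.normalizer (B : Set G)).map (QuotientGroup.mk' N) =
        Subgroup.normalizer ((A.map (QuotientGroup.mk' N) : Subgroup (G ⧸ N)) : Set (G ⧸ N)) ⊓
          Subgroup.normalizer ((B.map (QuotientGroup.mk' N) : Subgroup (G ⧸ N)) : Set (G ⧸ N)) :=
  normalizer_section_quotient_general M N hMN A B hAM hBA
end

section
/- Let M and N be normal subgroups of a finite group G with M ∩ N = 1, and let A, B be subgroups of M with B ⊴ A. Then the group of induced automorphisms Aut_G(A/B) is isomorphic to Aut_{G/N}((AN/N)/(BN/N)). -/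
/-! Since `M ⊓ N = ⊥`, the projection `G → G ⧸ N` is injective on `M`, so an element of `M`
lies in a subgroup `K ≤ M` iff its image lies in the image of `K`. As `M` is normal, all the
elements whose membership matters (conjugates of elements of `A` and `B`, and the commutators
`x⁻¹ a x a⁻¹`) lie in `M`; hence `N_G(A/B)` and `C_G(A/B)` are exactly the preimages of the
corresponding subgroups for the image section in `G ⧸ N`, and the surjective projection induces
the isomorphism of the quotients. -/

variable {G : Type*} [Group G]

/-- `N_G(A/B) = N_G(A) ∩ N_G(B)`, the normalizer of the section `A/B` in `G`. -/
def sectionNormalizer (A B : Subgroup G) : Subgroup G := Subgroup.normalizer (A : Set G) ⊓ Subgroup.normalizer (B : Set G)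

/-- `C_G(A/B)`: elements normalizing `A` and `B` and inducing the trivial
automorphism on `A/B` (by `Ba ↦ B x⁻¹ a x`). -/
def sectionCentralizer (A B : Subgroup G) : Subgroup G where
  carrier := {x | x ∈ Subgroup.normalizer (A : Set G) ∧ x ∈ Subgroup.normalizer (B : Set G) ∧ ∀ a ∈ A, x⁻¹ * a * x * a⁻¹ ∈ B}
  one_mem' := ⟨Subgroup.one_mem _, Subgroup.one_mem _, fun a _ => by simpa using B.one_mem⟩
  mul_mem' := by
    rintro x y ⟨hxA, hxB, hx⟩ ⟨hyA, hyB, hy⟩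
    refine ⟨mul_mem hxA hyA, mul_mem hxB hyB, fun a ha => ?_⟩
    have ha1 : x⁻¹ * a * x ∈ A := by
      have := (Subgroup.mem_normalizer_iff.mp (inv_mem hxA) a).mp ha
      simpa [mul_assoc] using this
    have h1 : y⁻¹ * (x⁻¹ * a * x) * y * (x⁻¹ * a * x)⁻¹ ∈ B := hy _ ha1
    have h2 : (x⁻¹ * a * x) * a⁻¹ ∈ B := hx a ha
    have key : (x * y)⁻¹ * a * (x * y) * a⁻¹ =
        (y⁻¹ * (x⁻¹ * a * x) * y * (x⁻¹ * a * x)⁻¹) * ((x⁻¹ * a * x) * a⁻¹) := by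
      group
    rw [key]; exact mul_mem h1 h2
  inv_mem' := by
    rintro x ⟨hxA, hxB, hx⟩
    refine ⟨inv_mem hxA, inv_mem hxB, fun a ha => ?_⟩
    have ha' : x * a * x⁻¹ ∈ A := (Subgroup.mem_normalizer_iff.mp hxA a).mp ha
    have h1 : x⁻¹ * (x * a * x⁻¹) * x * (x * a * x⁻¹)⁻¹ ∈ B := hx _ ha'
    have key : ((x⁻¹)⁻¹ * a * x⁻¹ * a⁻¹) =
        (x⁻¹ * (x * a * x⁻¹) * x * (x * a * x⁻¹)⁻¹)⁻¹ := by group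
    rw [key]; exact inv_mem h1
  
instance sectionCentralizer_normal (A B : Subgroup G) :
    ((sectionCentralizer A B).subgroupOf (sectionNormalizer A B)).Normal := by
  constructor
  intro c hc g
  rw [Subgroup.mem_subgroupOf] at hc ⊢
  obtain ⟨hcA, hcB, hcact⟩ := hc
  obtain ⟨hgA, hgB⟩ := g.2
  refine ⟨?_, ?_, ?_⟩
  · exact mul_mem (mul_mem hgA hcA) (inv_mem hgA)
  · exact mul_mem (mul_mem hgB hcB) (inv_mem hgB)
  · intro a ha
    have ha1 : (g : G)⁻¹ * a * g ∈ A := by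
      have := (Subgroup.mem_normalizer_iff.mp (inv_mem hgA) a).mp ha
      simpa [mul_assoc] using this
    have hb : c⁻¹ * ((g : G)⁻¹ * a * g) * c * ((g : G)⁻¹ * a * g)⁻¹ ∈ B := hcact _ ha1
    have hgb : (g : G) * (c⁻¹ * ((g : G)⁻¹ * a * g) * c * ((g : G)⁻¹ * a * g)⁻¹) * (g : G)⁻¹ ∈ B :=
      (Subgroup.mem_normalizer_iff.mp hgB _).mp hb
    have key : (↑(g * c * g⁻¹) : G)⁻¹ * a * (↑(g * c * g⁻¹) : G) * a⁻¹ =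
        (g : G) * (c⁻¹ * ((g : G)⁻¹ * a * g) * c * ((g : G)⁻¹ * a * g)⁻¹) * (g : G)⁻¹ := by
      push_cast
      group
    rw [key]; exact hgb

theorem mem_sectionCentralizer {A B : Subgroup G} {x : G} :
    x ∈ sectionCentralizer A B ↔ x ∈ Subgroup.normalizer (A : Set G) ∧
      x ∈ Subgroup.normalizer (B : Set G) ∧ ∀ a ∈ A, x⁻¹ * a * x * a⁻¹ ∈ B :=
  Iff.rfl

universe v

noncomputable def quotientSubgroupOfEquivOfSurjective {H : Type v} [Group H] {f : G →* H}
    (hf : Function.Surjective f) {P C : Subgroup G} {Q D : Subgroup H}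
    [(C.subgroupOf P).Normal] [(D.subgroupOf Q).Normal]
    (hP : Q.comap f = P) (hC : D.comap f = C) :
    P ⧸ C.subgroupOf P ≃* Q ⧸ D.subgroupOf Q :=
  let ψ : P →* Q := (f.comp P.subtype).codRestrict Q fun p => hP ▸ p.2
  have hψ : Function.Surjective ψ := by
    rintro ⟨q, hq⟩
    obtain ⟨g, rfl⟩ := hf q
    exact ⟨⟨g, hP ▸ hq⟩, rfl⟩
  have hker : C.subgroupOf P = ((QuotientGroup.mk' (D.subgroupOf Q)).comp ψ).ker := by
    ext p
    rw [MonoidHom.mem_ker, MonoidHom.comp_apply, QuotientGroup.mk'_apply,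
      QuotientGroup.eq_one_iff, Subgroup.mem_subgroupOf, Subgroup.mem_subgroupOf, ← hC]
    rfl
  (QuotientGroup.quotientMulEquivOfEq hker).trans
    (QuotientGroup.quotientKerEquivOfSurjective _ ((QuotientGroup.mk'_surjective _).comp hψ))

section InjectiveOnNormalSubgroup

variable {H : Type v} [Group H] {f : G →* H} {M K : Subgroup G}

theorem map_mem_map_iff_of_inf_ker_eq_bot (hM : M ⊓ f.ker = ⊥) (hK : K ≤ M) {x : G}
    (hx : x ∈ M) : f x ∈ K.map f ↔ x ∈ K := by
  refine ⟨fun ⟨k, hk, hkx⟩ => ?_, Subgroup.mem_map_of_mem f⟩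
  have hxk : x * k⁻¹ ∈ M ⊓ f.ker :=
    Subgroup.mem_inf.mpr ⟨mul_mem hx (inv_mem (hK hk)), by simp [hkx]⟩
  rw [hM, Subgroup.mem_bot] at hxk
  rwa [mul_inv_eq_one.mp hxk]

theorem mem_normalizer_iff_map_mem_normalizer_map [M.Normal] (hM : M ⊓ f.ker = ⊥) (hK : K ≤ M)
    {g : G} : g ∈ Subgroup.normalizer (K : Set G) ↔
      f g ∈ Subgroup.normalizer ((K.map f : Subgroup H) : Set H) := by
  refine ⟨fun hg => Subgroup.le_normalizer_map f ⟨g, hg, rfl⟩, fun hg => ?_⟩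
  rw [Subgroup.mem_normalizer_iff] at hg ⊢
  intro a
  have hconj : f (g * a * g⁻¹) = f g * f a * (f g)⁻¹ := by simp
  constructor
  · intro ha
    rw [← map_mem_map_iff_of_inf_ker_eq_bot hM hK ((‹M.Normal›).conj_mem a (hK ha) g), hconj,
      ← hg]
    exact Subgroup.mem_map_of_mem f ha
  · intro ha
    have haM : a ∈ M := by simpa [mul_assoc] using (‹M.Normal›).conj_mem _ (hK ha) g⁻¹
    rw [← map_mem_map_iff_of_inf_ker_eq_bot hM hK haM, hg, ← hconj]
    exact Subgroup.mem_map_of_mem f ha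

variable {A B : Subgroup G}

theorem comap_sectionNormalizer_map [M.Normal] (hM : M ⊓ f.ker = ⊥) (hAM : A ≤ M) (hBM : B ≤ M) :
    (sectionNormalizer (A.map f) (B.map f)).comap f = sectionNormalizer A B := by
  ext g
  exact and_congr (mem_normalizer_iff_map_mem_normalizer_map hM hAM).symm
    (mem_normalizer_iff_map_mem_normalizer_map hM hBM).symm

theorem comap_sectionCentralizer_map [M.Normal] (hM : M ⊓ f.ker = ⊥) (hAM : A ≤ M)
    (hBM : B ≤ M) :
    (sectionCentralizer (A.map f) (B.map f)).comap f = sectionCentralizer A B := by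
  ext g
  rw [Subgroup.mem_comap, mem_sectionCentralizer, mem_sectionCentralizer,
    ← mem_normalizer_iff_map_mem_normalizer_map hM hAM,
    ← mem_normalizer_iff_map_mem_normalizer_map hM hBM]
  refine and_congr_right fun _ => and_congr_right fun _ => ?_
  simp only [Subgroup.mem_map, forall_exists_index, and_imp, forall_apply_eq_imp_iff₂]
  refine forall₂_congr fun a ha => ?_
  have hcomm : g⁻¹ * a * g * a⁻¹ ∈ M :=
    mul_mem (by simpa using (‹M.Normal›).conj_mem a (hAM ha) g⁻¹) (inv_mem (hAM ha))
  rw [← map_mem_map_iff_of_inf_ker_eq_bot hM hBM hcomm]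
  simp

theorem inducedAutomorphisms_iso_quotient_general {G : Type*} [Group G]
    (M N : Subgroup G) [M.Normal] [N.Normal] (hMN : M ⊓ N = ⊥)
    (A B : Subgroup G) (hAM : A ≤ M) (hBA : B ≤ A) :
    Nonempty
      ((sectionNormalizer A B ⧸
          (sectionCentralizer A B).subgroupOf (sectionNormalizer A B)) ≃*
        (sectionNormalizer (A.map (QuotientGroup.mk' N)) (B.map (QuotientGroup.mk' N)) ⧸
          (sectionCentralizer (A.map (QuotientGroup.mk' N)) (B.map (QuotientGroup.mk' N))).subgroupOf
            (sectionNormalizer (A.map (QuotientGroup.mk' N)) (B.map (QuotientGroup.mk' N))))) := by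
  have hM : M ⊓ (QuotientGroup.mk' N).ker = ⊥ := by rwa [QuotientGroup.ker_mk']
  have hBM : B ≤ M := hBA.trans hAM
  exact ⟨(quotientSubgroupOfEquivOfSurjective (QuotientGroup.mk'_surjective N)
    (comap_sectionNormalizer_map hM hAM hBM) (comap_sectionCentralizer_map hM hAM hBM))⟩

/-- `Aut_G(A/B) ≅ Aut_{G/N}(A̅/B̅)` when `M, N ⊴ G`, `M ∩ N = 1`, `B ⊴ A ≤ M`,
where the group of induced automorphisms is `N_G(A/B)/C_G(A/B)`. -/
theorem inducedAutomorphisms_iso_quotient {G : Type*} [Group G] [Finite G]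
    (M N : Subgroup G) [M.Normal] [N.Normal] (hMN : M ⊓ N = ⊥)
    (A B : Subgroup G) (hAM : A ≤ M) (hBA : B ≤ A)
    (hBnormA : ∀ a ∈ A, ∀ b ∈ B, a * b * a⁻¹ ∈ B) :
    Nonempty
      ((sectionNormalizer A B ⧸
          (sectionCentralizer A B).subgroupOf (sectionNormalizer A B)) ≃*
        (sectionNormalizer (A.map (QuotientGroup.mk' N)) (B.map (QuotientGroup.mk' N)) ⧸
          (sectionCentralizer (A.map (QuotientGroup.mk' N)) (B.map (QuotientGroup.mk' N))).subgroupOf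
            (sectionNormalizer (A.map (QuotientGroup.mk' N)) (B.map (QuotientGroup.mk' N))))) :=
  inducedAutomorphisms_iso_quotient_general M N hMN A B hAM hBA
end InjectiveOnNormalSubgroup
end

section
/- Let A be a normal subgroup of a finite group G such that A contains a π-Hall subgroup, G/A is a π-group, and let M be a π-Hall subgroup of A. Then there exists a π-Hall subgroup H of G with H ∩ A = M if and only if the A-conjugacy class {Mᵃ : a ∈ A} is invariant under conjugation by every element of G. -/
/-!
If `H` is a `π`-Hall subgroup of `G` then `|G : HA|` divides both the `π'`-number `|G : H|` and
the `π`-number `|G : A|`, so `G = AH`; every `g` is then `a h` with `h` normalizing `H ⊓ A = M`.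
Conversely, invariance of the class of `M` is exactly the Frattini argument `G = A N_G(M)`.
In `N_G(M) / M` the image of `A ⊓ N_G(M)` is a normal `π'`-subgroup of `π`-index, so by
Schur–Zassenhaus it has a complement, whose preimage `H` satisfies `H ⊓ A = M` and `AH = G`.
Whenever `AH = G` we have `|G : H| = |A : H ⊓ A|` and `|H| = |H ⊓ A| |G : A|`, which makes `H`
a `π`-Hall subgroup as soon as `H ⊓ A` is one of `A`.
-/

open Pointwise

namespace IsPiNumber

variable {π : Set ℕ} {m n : ℕ}

theorem mul_s6 (hm : IsPiNumber π m) (hn : IsPiNumber π n) : IsPiNumber π (m * n) :=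
  fun p hp hpmn => (hp.dvd_mul.mp hpmn).elim (hm p hp) (hn p hp)

theorem coprime_s6 (hm : IsPiNumber π m) (hn : IsPiNumber πᶜ n) : m.Coprime n :=
  Nat.coprime_of_dvd fun p hp hpm hpn => hn p hp hpn (hm p hp hpm)

end IsPiNumber

namespace Subgroup

variable {G : Type*} [Group G]

theorem conj_smul_eq_self_iff {M : Subgroup G} {g : G} :
    MulAut.conj g • M = M ↔ g ∈ normalizer (M : Set G) := by
  rw [← conjAct_pointwise_smul_iff]
  rfl

theorem sup_eq_top_of_coprime_index {H K : Subgroup G} (h : H.index.Coprime K.index) :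
    H ⊔ K = ⊤ :=
  index_eq_one.mp <| Nat.eq_one_of_dvd_coprimes h (index_dvd_of_le le_sup_left)
    (index_dvd_of_le le_sup_right)

section NormalSupEqTop

variable {A H : Subgroup G} [A.Normal]

theorem exists_conj_smul_inf_eq (hAH : A ⊔ H = ⊤) (g : G) :
    ∃ a ∈ A, MulAut.conj g • (H ⊓ A) = MulAut.conj a • (H ⊓ A) := by
  obtain ⟨a, ha, h, hh, rfl⟩ := mem_sup_of_normal_left.mp (hAH ▸ mem_top g : g ∈ A ⊔ H)
  refine ⟨a, ha, ?_⟩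
  rw [map_mul, mul_smul, smul_inf, conj_smul_eq_self_of_mem hh, Normal.conj_smul_eq_self h A]

theorem relIndex_eq_index_of_sup_eq_top (hAH : A ⊔ H = ⊤) : A.relIndex H = A.index := by
  rw [← relIndex_sup_left, hAH, relIndex_top_right]

theorem relIndex_inf_eq_index_of_sup_eq_top [A.FiniteIndex] (hAH : A ⊔ H = ⊤) :
    (H ⊓ A).relIndex A = H.index := by
  have hA := relIndex_mul_index (inf_le_right : H ⊓ A ≤ A)
  rw [← relIndex_mul_index (inf_le_left : H ⊓ A ≤ H), inf_relIndex_left,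
    relIndex_eq_index_of_sup_eq_top hAH, mul_comm] at hA
  exact Nat.eq_of_mul_eq_mul_left (Nat.pos_of_ne_zero FiniteIndex.index_ne_zero) hA

theorem card_eq_card_inf_mul_index_of_sup_eq_top (hAH : A ⊔ H = ⊤) :
    Nat.card H = Nat.card (H ⊓ A : Subgroup G) * A.index := by
  rw [← relIndex_eq_index_of_sup_eq_top hAH, ← inf_relIndex_left, ← relIndex_bot_left,
    ← relIndex_bot_left, relIndex_mul_relIndex _ _ _ bot_le inf_le_left]

theorem isPiHall_of_sup_eq_top {π : Set ℕ} [A.FiniteIndex] (hAH : A ⊔ H = ⊤)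
    (hGA : IsPiNumber π A.index) (hHA : IsPiHall π ((H ⊓ A).subgroupOf A)) : IsPiHall π H := by
  refine ⟨?_, relIndex_inf_eq_index_of_sup_eq_top hAH ▸ hHA.2⟩
  rw [card_eq_card_inf_mul_index_of_sup_eq_top hAH]
  refine IsPiNumber.mul_s6 ?_ hGA
  rw [← relIndex_bot_left, ← relIndex_subgroupOf inf_le_right, bot_subgroupOf,
    relIndex_bot_left]
  exact hHA.1

end NormalSupEqTop

theorem sup_normalizer_eq_top_of_forall_conj_smul {A M : Subgroup G}
    (h : ∀ g : G, ∃ a ∈ A, MulAut.conj g • M = MulAut.conj a • M) :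
    A ⊔ normalizer (M : Set G) = ⊤ := by
  refine eq_top_iff.mpr fun g _ => ?_
  obtain ⟨a, ha, hga⟩ := h g
  have hn : a⁻¹ * g ∈ normalizer (M : Set G) := by
    rw [← conj_smul_eq_self_iff, map_mul, mul_smul, hga, ← mul_smul, ← map_mul, inv_mul_cancel,
      map_one, one_smul]
  simpa using mul_mem_sup ha hn

theorem exists_inf_eq_and_sup_eq_top_of_coprime {M B : Subgroup G} [M.Normal] [B.Normal]
    (hMB : M ≤ B) (hcop : (M.relIndex B).Coprime B.index) :
    ∃ H : Subgroup G, H ⊓ B = M ∧ B ⊔ H = ⊤ := by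
  set f := QuotientGroup.mk' M
  have hf : Function.Surjective f := QuotientGroup.mk'_surjective M
  have hB : (B.map f).comap f = B := by
    rw [comap_map_eq, QuotientGroup.ker_mk', sup_of_le_left hMB]
  have : (B.map f).Normal := Normal.map inferInstance f hf
  have hcard : Nat.card (B.map f) = M.relIndex B := by
    rw [← relIndex_bot_left, ← relIndex_comap, MonoidHom.comap_bot, QuotientGroup.ker_mk']
  obtain ⟨K, hK⟩ := exists_right_complement'_of_coprime (N := B.map f)
    (by rwa [hcard, ← (B.map f).index_comap_of_surjective hf, hB])
  refine ⟨K.comap f, ?_, ?_⟩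
  · rw [← hB, ← comap_inf, inf_comm, hK.isCompl.inf_eq_bot, MonoidHom.comap_bot,
      QuotientGroup.ker_mk']
  · rw [← hB, comap_sup_eq f _ _ hf, hK.sup_eq_top, comap_top]

theorem exists_inf_eq_and_sup_eq_top_of_sup_normalizer_eq_top {A M : Subgroup G} [A.Normal]
    (hMA : M ≤ A) (hAN : A ⊔ normalizer (M : Set G) = ⊤)
    (hcop : (M.relIndex A).Coprime A.index) : ∃ H : Subgroup G, H ⊓ A = M ∧ A ⊔ H = ⊤ := by
  set N := normalizer (M : Set G)
  have hMN : M ≤ N := le_normalizer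
  have : (M.subgroupOf N).Normal := normal_in_normalizer
  have hcopN : ((M.subgroupOf N).relIndex (A.subgroupOf N)).Coprime (A.subgroupOf N).index := by
    have hdvd : M.relIndex (A ⊓ N) ∣ M.relIndex A :=
      Dvd.intro _ (relIndex_mul_relIndex M (A ⊓ N) A (le_inf hMA hMN) inf_le_left)
    have hidx : (A.subgroupOf N).index = A.index := relIndex_eq_index_of_sup_eq_top hAN
    rw [hidx, ← inf_subgroupOf_right A N, relIndex_subgroupOf inf_le_right]
    exact hcop.coprime_dvd_left hdvd
  obtain ⟨H, hHA, hAH⟩ := exists_inf_eq_and_sup_eq_top_of_coprime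
    (M := M.subgroupOf N) (B := A.subgroupOf N) (fun _ hx => hMA hx) hcopN
  refine ⟨H.map N.subtype, ?_, ?_⟩
  · have := congrArg (map N.subtype) hHA
    rwa [map_inf _ _ _ N.subtype_injective, subgroupOf_map_subtype, subgroupOf_map_subtype,
      inf_of_le_left hMN, inf_comm A, ← inf_assoc, inf_of_le_left (map_subtype_le H)] at this
  · have := congrArg (map N.subtype) hAH
    rw [map_sup, subgroupOf_map_subtype, ← MonoidHom.range_eq_map, range_subtype] at this
    refine eq_top_iff.mpr ?_
    calc ⊤ = A ⊔ (A ⊓ N ⊔ H.map N.subtype) := by rw [this, hAN]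
      _ ≤ A ⊔ H.map N.subtype :=
        sup_le le_sup_left (sup_le (inf_le_left.trans le_sup_left) le_sup_right)

end Subgroup

theorem hall_extension_iff_invariant_class_general {G : Type*} [Group G] [Finite G] (π : Set ℕ)
    (A : Subgroup G) [A.Normal]
    (hGA : IsPiNumber π (Nat.card (G ⧸ A)))
    (M : Subgroup G) (hMA : M ≤ A) (hM : IsPiHall π (M.subgroupOf A)) :
    (∃ H : Subgroup G, IsPiHall π H ∧ H ⊓ A = M) ↔
      ∀ g : G, ∃ a ∈ A, MulAut.conj g • M = MulAut.conj a • M := by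
  constructor
  · rintro ⟨H, hH, rfl⟩
    exact Subgroup.exists_conj_smul_inf_eq
      (Subgroup.sup_eq_top_of_coprime_index (hGA.coprime_s6 hH.2))
  · intro hinv
    obtain ⟨H, hHA, hAH⟩ := Subgroup.exists_inf_eq_and_sup_eq_top_of_sup_normalizer_eq_top hMA
      (Subgroup.sup_normalizer_eq_top_of_forall_conj_smul hinv) (hGA.coprime_s6 hM.2).symm
    exact ⟨H, Subgroup.isPiHall_of_sup_eq_top hAH hGA (hHA ▸ hM), hHA⟩

/-- Let `A ⊴ G` with `G/A` a `π`-group, and `M` a `π`-Hall subgroup of `A`. There is a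
`π`-Hall subgroup `H` of `G` with `H ∩ A = M` iff the `A`-class `{Mᵃ : a ∈ A}` is
`G`-invariant. -/
theorem hall_extension_iff_invariant_class {G : Type*} [Group G] [Finite G] (π : Set ℕ)
    (A : Subgroup G) [A.Normal]
    (hA : ∃ K : Subgroup G, K ≤ A ∧ IsPiHall π (K.subgroupOf A))
    (hGA : IsPiNumber π (Nat.card (G ⧸ A)))
    (M : Subgroup G) (hMA : M ≤ A) (hM : IsPiHall π (M.subgroupOf A)) :
    (∃ H : Subgroup G, IsPiHall π H ∧ H ⊓ A = M) ↔
      ∀ g : G, ∃ a ∈ A, MulAut.conj g • M = MulAut.conj a • M :=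
  hall_extension_iff_invariant_class_general π A hGA M hMA hM
end

section
/- Let S be a normal subgroup of a finite group G such that G/S is solvable (e.g., G ≤ Aut(S) with S simple, by the Schreier conjecture), and suppose every proper subgroup M with S ≤ M < G contains a π-Hall subgroup whose index computation makes it a π-Hall subgroup of G whenever |G:M| is a π'-number. If G has no π-Hall subgroup and S ≤ G is such a minimal counterexample configuration, then G/S is a π-group. Formally: if G/S ∈ D_π, and for every M with S ≤ M < G, M ∈ E_π, and G ∉ E_π, then G/S is a π-group. -/
open Pointwise

/-- `K` satisfies `E_π`: it has a `π`-Hall subgroup. -/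
def SatisfiesEpi (π : Set ℕ) (K : Type*) [Group K] : Prop :=
  ∃ H : Subgroup K, IsPiHall π H

/-- `K` satisfies `D_π`: it has a `π`-Hall subgroup, all `π`-Hall subgroups are
conjugate, and every `π`-subgroup lies in a `π`-Hall subgroup. -/
def SatisfiesDpi (π : Set ℕ) (K : Type*) [Group K] : Prop :=
  (∃ H : Subgroup K, IsPiHall π H) ∧
  (∀ H₁ H₂ : Subgroup K, IsPiHall π H₁ → IsPiHall π H₂ →
    ∃ g : K, MulAut.conj g • H₁ = H₂) ∧
  (∀ P : Subgroup K, IsPiNumber π (Nat.card P) → ∃ H : Subgroup K, IsPiHall π H ∧ P ≤ H)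

/-!
Pull a `π`-Hall subgroup `H/S` of `G/S` back to `M ≥ S`, so that `|G : M| = |G/S : H/S|` is a
`π'`-number. If `M = G`, then `G/S = H/S` is a `π`-group. Otherwise `M` has a `π`-Hall subgroup
by minimality, and since indices multiply along `K ≤ M ≤ G`, it is a `π`-Hall subgroup of `G`,
which does not exist.
-/

theorem IsPiNumber.mul_s14 {π : Set ℕ} {a b : ℕ} (ha : IsPiNumber π a) (hb : IsPiNumber π b) :
    IsPiNumber π (a * b) := fun p hp hpd =>
  (hp.dvd_mul.mp hpd).elim (ha p hp) (hb p hp)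

theorem IsPiHall.isPiNumber_index {π : Set ℕ} {G : Type*} [Group G] {H : Subgroup G}
    (hH : IsPiHall π H) : IsPiNumber πᶜ H.index :=
  hH.2

theorem IsPiHall.map_subtype_s14 {π : Set ℕ} {G : Type*} [Group G] {M : Subgroup G}
    {K : Subgroup M} (hK : IsPiHall π K) (hM : IsPiNumber πᶜ M.index) :
    IsPiHall π (K.map M.subtype) := by
  refine ⟨?_, ?_⟩
  · rw [Subgroup.card_subtype]
    exact hK.1
  · rw [Subgroup.index_map_subtype]
    exact hK.isPiNumber_index.mul_s14 hM

theorem SatisfiesEpi.of_subgroup {π : Set ℕ} {G : Type*} [Group G] {M : Subgroup G}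
    (hM : SatisfiesEpi π M) (hindex : IsPiNumber πᶜ M.index) : SatisfiesEpi π G :=
  let ⟨K, hK⟩ := hM
  ⟨K.map M.subtype, hK.map_subtype_s14 hindex⟩

theorem quotient_pi_group_of_minimal_counterexample_general {G : Type*} [Group G]
    (π : Set ℕ) (S : Subgroup G) [S.Normal]
    (hD : SatisfiesDpi π (G ⧸ S))
    (hmin : ∀ M : Subgroup G, S ≤ M → M ≠ ⊤ → SatisfiesEpi π M)
    (hG : ¬ SatisfiesEpi π G) :
    IsPiNumber π (Nat.card (G ⧸ S)) := by
  obtain ⟨H, hH⟩ := hD.1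
  have hmk : Function.Surjective (QuotientGroup.mk' S) := QuotientGroup.mk'_surjective S
  by_cases htop : H = ⊤
  · rw [← Subgroup.card_top (G := G ⧸ S), ← htop]
    exact hH.1
  · have hSM : S ≤ H.comap (QuotientGroup.mk' S) := by
      simpa only [QuotientGroup.ker_mk'] using H.ker_le_comap (QuotientGroup.mk' S)
    have hMtop : H.comap (QuotientGroup.mk' S) ≠ ⊤ := by
      rwa [← Subgroup.comap_top (QuotientGroup.mk' S), (Subgroup.comap_injective hmk).ne_iff]
    have hindex : IsPiNumber πᶜ (H.comap (QuotientGroup.mk' S)).index := by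
      rw [Subgroup.index_comap_of_surjective _ hmk]
      exact hH.isPiNumber_index
    exact absurd ((hmin _ hSM hMtop).of_subgroup hindex) hG

/-- If `S ⊴ G`, `G/S ∈ D_π`, every proper subgroup `M` with `S ≤ M < G` satisfies
`E_π`, and `G ∉ E_π`, then `G/S` is a `π`-group. -/
theorem quotient_pi_group_of_minimal_counterexample {G : Type*} [Group G] [Finite G]
    (π : Set ℕ) (S : Subgroup G) [S.Normal]
    (hD : SatisfiesDpi π (G ⧸ S))
    (hmin : ∀ M : Subgroup G, S ≤ M → M ≠ ⊤ → SatisfiesEpi π M)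
    (hG : ¬ SatisfiesEpi π G) :
    IsPiNumber π (Nat.card (G ⧸ S)) :=
  quotient_pi_group_of_minimal_counterexample_general π S hD hmin hG
end

section
/- Let G be a finite group acting on a finite nonempty set Ω with every orbit of size at least 2 (no fixed points), where |Ω| = 4. Then there exists an element x ∈ G of order a power of 2 acting on Ω without fixed points. -/
/-!
First find a derangement `g ∈ G`. If `G` is transitive, Burnside's lemma gives one: the average
number of fixed points is `1`, while the identity fixes all four points. Otherwise there are two
orbits of size `2`, on each of which an element either swaps or fixes both points, and elements
moving a point of each orbit combine to one moving every point.

A derangement of four points has cycle type `(4)` or `(2, 2)`, so `g ^ 4` acts trivially. Writing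
`orderOf g = 2 ^ k * m` with `m` odd, `g ^ m` is a `2`-element, and since `m` is prime to `4`, `g`
acts as a power of `g ^ m`; hence `g ^ m` is again a derangement.
-/

open MulAction

set_option maxRecDepth 10000 in
theorem Equiv.Perm.pow_four_eq_one_of_forall_apply_ne {α : Type*} [Fintype α]
    (hα : Fintype.card α = 4) {σ : Equiv.Perm α} (hσ : ∀ a, σ a ≠ a) : σ ^ 4 = 1 := by
  have fin_four : ∀ τ : Equiv.Perm (Fin 4), (∀ i, τ i ≠ i) → τ ^ 4 = 1 := by decide
  let f := Fintype.equivFinOfCardEq hα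
  have hf : f.permCongrHom σ ^ 4 = 1 := by
    refine fin_four _ fun i h ↦ hσ (f.symm i) ?_
    rwa [permCongrHom_coe, permCongr_apply, ← f.eq_symm_apply] at h
  rwa [← map_pow, MulEquiv.map_eq_one_iff] at hf

theorem orderOf_pow_ordCompl {G : Type*} [Monoid G] {g : G} (p : ℕ) (hg : IsOfFinOrder g) :
    orderOf (g ^ ordCompl[p] (orderOf g)) = ordProj[p] (orderOf g) :=
  orderOf_pow_orderOf_div hg.orderOf_pos.ne' (Nat.ordProj_dvd _ _)

namespace MulAction

variable {G X : Type*} [Group G] [MulAction G X]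

theorem smul_eq_of_pow_smul_eq_of_coprime {g : G} {x : X} {m n : ℕ} (hmn : m.Coprime n)
    (hm : g ^ m • x = x) (hn : g ^ n • x = x) : g • x = x := by
  have hm : g ^ m ∈ stabilizer G x := hm
  have hn : g ^ n ∈ stabilizer G x := hn
  suffices g ^ (m.gcd n : ℤ) ∈ stabilizer G x by simpa [hmn.gcd_eq_one] using this
  rw [Nat.gcd_eq_gcd_ab, zpow_add, zpow_mul, zpow_mul]
  exact mul_mem (zpow_mem (mod_cast hm) _) (zpow_mem (mod_cast hn) _)

theorem exists_forall_smul_ne_of_isPretransitive [Finite G] [Finite X] [IsPretransitive G X]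
    (hX : 1 < Nat.card X) : ∃ g : G, ∀ x : X, g • x ≠ x := by
  classical
  cases nonempty_fintype G
  cases nonempty_fintype X
  by_contra! hfix
  obtain ⟨x⟩ : Nonempty X := Nat.card_pos_iff.mp (by omega) |>.1
  have : Unique (orbitRel.Quotient G X) :=
    @uniqueOfSubsingleton _ ((pretransitive_iff_subsingleton_quotient ..).mp ‹_›) ⟦x⟧
  have hburnside := sum_card_fixedBy_eq_card_orbits_mul_card_group G X
  rw [Fintype.card_unique, one_mul, ← Finset.card_univ, Finset.card_eq_sum_ones] at hburnside
  refine hburnside.not_gt (Finset.sum_lt_sum (fun g _ ↦ ?_) ⟨1, Finset.mem_univ _, ?_⟩)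
  · obtain ⟨x, hx⟩ := hfix g
    exact Fintype.card_pos_iff.mpr ⟨⟨x, hx⟩⟩
  · simpa [fixedBy_one_eq_univ, Nat.card_eq_fintype_card] using hX

theorem smul_ne_of_mem_orbit_of_ncard_orbit_eq_two {g : G} {x y : X}
    (hx : (orbit G x).ncard = 2) (hgx : g • x ≠ x) (hy : y ∈ orbit G x) : g • y ≠ y := by
  intro hgy
  have hxy : x ≠ y := by rintro rfl; exact hgx hgy
  obtain ⟨a, b, -, hab⟩ := Set.ncard_eq_two.mp hx
  have hx' := mem_orbit_self (M := G) x
  have hgx' := mem_orbit x g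
  rw [hab] at hx' hgx' hy
  have hgxy : g • x = y := by grind
  exact hxy (smul_left_cancel g (hgxy.trans hgy.symm))

theorem exists_forall_smul_ne_of_ncard_orbit_eq_two {a b : X} (ha : (orbit G a).ncard = 2)
    (hb : (orbit G b).ncard = 2) (hcover : orbit G a ∪ orbit G b = Set.univ)
    {g h : G} (hga : g • a ≠ a) (hhb : h • b ≠ b) : ∃ k : G, ∀ x : X, k • x ≠ x := by
  have moves_all (k : G) (hka : k • a ≠ a) (hkb : k • b ≠ b) (x : X) : k • x ≠ x := by
    rcases hcover.symm ▸ Set.mem_univ x with hx | hx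
    exacts [smul_ne_of_mem_orbit_of_ncard_orbit_eq_two ha hka hx,
      smul_ne_of_mem_orbit_of_ncard_orbit_eq_two hb hkb hx]
  by_cases hgb : g • b = b
  swap
  · exact ⟨g, moves_all g hga hgb⟩
  by_cases hha : h • a = a
  swap
  · exact ⟨h, moves_all h hha hhb⟩
  -- `g` fixes `b`, hence all of its orbit `{b, h • b}`.
  have hghb : g • h • b = h • b := by
    by_contra hne
    refine smul_ne_of_mem_orbit_of_ncard_orbit_eq_two ?_ hne ?_ hgb
    · rwa [orbit_smul]
    · rw [orbit_smul]; exact mem_orbit_self b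
  refine ⟨g * h, moves_all _ ?_ ?_⟩
  · rwa [mul_smul, hha]
  · rwa [mul_smul, hghb]

theorem exists_forall_smul_ne_of_card_eq_four [Finite G] [Fintype X] (hX : Fintype.card X = 4)
    (hfree : ∀ x : X, ∃ g : G, g • x ≠ x) : ∃ g : G, ∀ x : X, g • x ≠ x := by
  have two_le (x : X) : 2 ≤ (orbit G x).ncard := by
    obtain ⟨g, hg⟩ := hfree x
    exact (Set.one_lt_ncard_iff (Set.toFinite _)).mpr
      ⟨g • x, x, mem_orbit x g, mem_orbit_self x, hg⟩
  have hcard : Nat.card X = 4 := Nat.card_eq_fintype_card.trans hX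
  obtain ⟨a⟩ : Nonempty X := Fintype.card_pos_iff.mp (by omega)
  by_cases htrans : orbit G a = Set.univ
  · have := (isPretransitive_iff_orbit_eq_univ a).mpr htrans
    exact exists_forall_smul_ne_of_isPretransitive (by omega)
  obtain ⟨b, hb⟩ := (Set.ne_univ_iff_exists_notMem _).mp htrans
  have hdisj : Disjoint (orbit G a) (orbit G b) :=
    (orbit.eq_or_disjoint a b).resolve_left fun h ↦ hb (h ▸ mem_orbit_self b)
  have hunion := Set.ncard_union_eq hdisj
  have hle := Set.ncard_le_card (orbit G a ∪ orbit G b)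
  have hcover : orbit G a ∪ orbit G b = Set.univ :=
    Set.eq_of_subset_of_ncard_le (Set.subset_univ _) (by rw [Set.ncard_univ]; grind)
  obtain ⟨g, hg⟩ := hfree a
  obtain ⟨h, hh⟩ := hfree b
  exact exists_forall_smul_ne_of_ncard_orbit_eq_two (by grind) (by grind) hcover hg hh

end MulAction

/-- If a finite group `G` acts on a `4`-element set with no point fixed by all of `G`,
then some `x ∈ G` of order a power of `2` acts on `Ω` without fixed points. -/
theorem exists_two_element_fixed_point_free
    {G Ω : Type*} [Group G] [Finite G] [Fintype Ω] [MulAction G Ω]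
    (hΩ : Fintype.card Ω = 4) (hfree : ∀ p : Ω, ∃ g : G, g • p ≠ p) :
    ∃ x : G, (∃ k : ℕ, orderOf x = 2 ^ k) ∧ ∀ p : Ω, x • p ≠ p := by
  obtain ⟨g, hg⟩ := exists_forall_smul_ne_of_card_eq_four hΩ hfree
  have hg4 (p : Ω) : g ^ 4 • p = p := by
    have h := (toPermHom G Ω g).pow_four_eq_one_of_forall_apply_ne hΩ hg
    rw [← map_pow] at h
    simpa [toPermHom_apply, toPerm_apply] using DFunLike.congr_fun h p
  have hfin := isOfFinOrder_of_finite g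
  have hodd : (ordCompl[2] (orderOf g)).Coprime (2 ^ 2) :=
    (Nat.coprime_ordCompl Nat.prime_two hfin.orderOf_pos.ne').symm.pow_right 2
  exact ⟨g ^ ordCompl[2] (orderOf g), ⟨_, orderOf_pow_ordCompl 2 hfin⟩,
    fun p hp ↦ hg p (smul_eq_of_pow_smul_eq_of_coprime hodd hp (hg4 p))⟩
end
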